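/- Let Ξ_t(π) be a minimizer in the dynamic-programming recursion at each time t and belief π, and define the symmetric strategy g* by: along any action history u_{1:t-1}, set Π₁ = π₁, Π_{s+1} = η(Π_s, Ξ_s(Π_s), u_s) for s < t, and g*_t(m, u_{1:t-1}) = Ξ_t(Π_t)(m). Then g* is optimal among symmetric strategies: J(g*) ≤ J(h) for every symmetric strategy h, and moreover J(g*) = V₁(π₁). -/

import Mathlib

open Finset

noncomputable section

/-- Likelihood `ℓ(γ,m,u) = ∏_i γ(m^i)^{u^i} (1-γ(m^i))^{1-u^i}`. -/
def ell {n : ℕ} {M : Type} (γ : M → ℝ) (m : Fin n → M) (u : Fin n → Bool) : ℝ :=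
  ∏ i : Fin n, if u i then γ (m i) else 1 - γ (m i)

/-- `P(u|π,γ) = Σ_m π(m) ℓ(γ,m,u)`. -/
def Pout {n : ℕ} {M : Type} [Fintype M]
    (π : (Fin n → M) → ℝ) (γ : M → ℝ) (u : Fin n → Bool) : ℝ :=
  ∑ m : Fin n → M, π m * ell γ m u

open Classical in
/-- Updated belief `η(π,γ,u)(m) = π(m) ℓ(γ,m,u)/P(u|π,γ)` when `P(u|π,γ) ≠ 0`
(and `η(π,γ,u) = π` when `P(u|π,γ) = 0`, an arbitrary convention). -/
def etaUpd {n : ℕ} {M : Type} [Fintype M]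
    (π : (Fin n → M) → ℝ) (γ : M → ℝ) (u : Fin n → Bool) : (Fin n → M) → ℝ :=
  fun m => if Pout π γ u = 0 then π m else π m * ell γ m u / Pout π γ u

/-- One step of the dynamic-programming recursion: the expected current cost plus the
expected cost-to-go `W` at the updated belief,
`Σ_m Σ_u π(m) ℓ(γ,m,u) k(m,u) + Σ_u P(u|π,γ) W(η(π,γ,u))`
(any term with `P(u|π,γ) = 0` vanishes). -/
def stepVal {n : ℕ} {M : Type} [Fintype M]
    (k : (Fin n → M) → (Fin n → Bool) → ℝ)
    (W : ((Fin n → M) → ℝ) → ℝ)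
    (π : (Fin n → M) → ℝ) (γ : M → ℝ) : ℝ :=
  (∑ m : Fin n → M, ∑ u : Fin n → Bool, π m * ell γ m u * k m u) +
    ∑ u : Fin n → Bool, Pout π γ u * W (etaUpd π γ u)

/-- The set of prescriptions: maps `γ : M → [0,1]`. -/
def prescriptions (M : Type) : Set (M → ℝ) :=
  {γ | ∀ a, γ a ∈ Set.Icc (0 : ℝ) 1}

/-- The simplex of probability distributions on `𝓜^n`. -/
def simplex (n : ℕ) (M : Type) [Fintype M] : Set ((Fin n → M) → ℝ) :=
  {π | (∀ m, 0 ≤ π m) ∧ ∑ m : Fin n → M, π m = 1}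

/-- The prefix `u_{1:t-1}` of a full action sequence, at time `t`. -/
def pre {n T : ℕ} (u : Fin T → Fin n → Bool) (t : Fin T) : Fin t.1 → Fin n → Bool :=
  fun s => u ⟨s.1, s.2.trans t.2⟩

/-- Expected total cost `J(g)` of a symmetric strategy `g`. -/
def Jsym {n T : ℕ} {M : Type} [Fintype M]
    (π₁ : (Fin n → M) → ℝ)
    (k : Fin T → (Fin n → M) → (Fin n → Bool) → ℝ)
    (g : ∀ t : Fin T, M → (Fin t.1 → Fin n → Bool) → ℝ) : ℝ :=
  ∑ m : Fin n → M, π₁ m *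
    ∑ u : Fin T → Fin n → Bool,
      (∏ t : Fin T, ∏ i : Fin n,
        (if u t i then g t (m i) (pre u t) else 1 - g t (m i) (pre u t))) *
      (∑ t : Fin T, k t m (u t))

/-!
Conditioning on the first joint action `w` splits the expected cost `J(h)` under a prior `π`
into the expected first-stage cost plus the `P(w|π,γ)`-weighted expected cost, under the
posterior `η(π,γ,w)`, of the continuation strategy on the remaining horizon, where `γ` is the
first prescription of `h`. So `J` obeys the dynamic-programming recursion with `V` replaced by
the cost of the continuation strategies, and backward induction on the horizon gives
`V₀(π) ≤ J(h)` for every symmetric strategy `h`, with equality for `g*`, which plays the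
minimizers `Ξ` along the belief recursion `B`.
-/

section Belief

variable {n : ℕ} {M : Type}

lemma ell_nonneg {γ : M → ℝ} (hγ : γ ∈ prescriptions M) (m : Fin n → M) (u : Fin n → Bool) :
    0 ≤ ell γ m u :=
  prod_nonneg fun i _ => by
    obtain ⟨h0, h1⟩ := hγ (m i)
    split <;> linarith

lemma sum_ell (γ : M → ℝ) (m : Fin n → M) : ∑ u : Fin n → Bool, ell γ m u = 1 := by
  unfold ell
  rw [← Fintype.prod_sum (fun i (b : Bool) => if b then γ (m i) else 1 - γ (m i))]
  simp

variable [Fintype M] {π : (Fin n → M) → ℝ} {γ : M → ℝ}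

lemma Pout_nonneg (hπ : ∀ m, 0 ≤ π m) (hγ : γ ∈ prescriptions M) (u : Fin n → Bool) :
    0 ≤ Pout π γ u :=
  sum_nonneg fun m _ => mul_nonneg (hπ m) (ell_nonneg hγ m u)

lemma sum_Pout (γ : M → ℝ) : ∑ u : Fin n → Bool, Pout π γ u = ∑ m, π m := by
  simp only [Pout]
  rw [sum_comm]
  simp [← mul_sum, sum_ell]

lemma etaUpd_mem_simplex (hπ : π ∈ simplex n M) (hγ : γ ∈ prescriptions M)
    (u : Fin n → Bool) : etaUpd π γ u ∈ simplex n M := by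
  by_cases h : Pout π γ u = 0
  · rwa [show etaUpd π γ u = π from funext fun m => if_pos h]
  · refine ⟨fun m => ?_, ?_⟩
    · simp only [etaUpd, h, if_false]
      exact div_nonneg (mul_nonneg (hπ.1 m) (ell_nonneg hγ m u)) (Pout_nonneg hπ.1 hγ u)
    · simp only [etaUpd, h, if_false]
      rw [← sum_div, div_eq_one_iff_eq h, Pout]

/-- Bayes' rule; it also holds when `P(u|π,γ) = 0`, since then every `π m * ℓ(γ,m,u)`
vanishes. -/
lemma Pout_mul_sum_etaUpd_mul (hπ : ∀ m, 0 ≤ π m) (hγ : γ ∈ prescriptions M)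
    (u : Fin n → Bool) (f : (Fin n → M) → ℝ) :
    Pout π γ u * ∑ m, etaUpd π γ u m * f m = ∑ m, π m * ell γ m u * f m := by
  by_cases h : Pout π γ u = 0
  · have hzero := (sum_eq_zero_iff_of_nonneg fun m _ =>
      mul_nonneg (hπ m) (ell_nonneg hγ m u)).1 h
    simp [h, hzero]
  · rw [mul_sum]
    refine sum_congr rfl fun m _ => ?_
    simp only [etaUpd, h, if_false]
    field_simp

end Belief

section PathDecomposition

variable {n T : ℕ} {M : Type}

def pathProb (h : ∀ t : Fin T, M → (Fin t.1 → Fin n → Bool) → ℝ) (m : Fin n → M)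
    (u : Fin T → Fin n → Bool) : ℝ :=
  ∏ t, ell (fun a => h t a (pre u t)) m (u t)

def condCost (k : Fin T → (Fin n → M) → (Fin n → Bool) → ℝ)
    (h : ∀ t : Fin T, M → (Fin t.1 → Fin n → Bool) → ℝ) (m : Fin n → M) : ℝ :=
  ∑ u, pathProb h m u * ∑ t, k t m (u t)

def firstPrescription (h : ∀ t : Fin (T + 1), M → (Fin t.1 → Fin n → Bool) → ℝ) : M → ℝ :=
  fun a => h 0 a Fin.elim0

def strategyAfter (h : ∀ t : Fin (T + 1), M → (Fin t.1 → Fin n → Bool) → ℝ)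
    (w : Fin n → Bool) : ∀ t : Fin T, M → (Fin t.1 → Fin n → Bool) → ℝ :=
  fun t a c => h t.succ a (Fin.cons w c)

lemma pre_cons_succ (w : Fin n → Bool) (u : Fin T → Fin n → Bool) (t : Fin T) :
    pre (Fin.cons w u : Fin (T + 1) → Fin n → Bool) t.succ = Fin.cons w (pre u t) := by
  funext s
  refine Fin.cases rfl (fun s => ?_) s
  rfl

lemma init_cons {α : Type*} {t : ℕ} (w : α) (c : Fin (t + 1) → α) :
    (fun s : Fin (t + 1) => (Fin.cons w c : Fin (t + 2) → α) s.castSucc) =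
      Fin.cons w fun s => c s.castSucc := by
  funext s
  refine Fin.cases rfl (fun s => ?_) s
  rw [← Fin.succ_castSucc, Fin.cons_succ, Fin.cons_succ]

lemma pathProb_cons (h : ∀ t : Fin (T + 1), M → (Fin t.1 → Fin n → Bool) → ℝ)
    (m : Fin n → M) (w : Fin n → Bool) (u : Fin T → Fin n → Bool) :
    pathProb h m (Fin.cons w u) =
      ell (firstPrescription h) m w * pathProb (strategyAfter h w) m u := by
  rw [pathProb, Fin.prod_univ_succ]
  congr 1
  · rw [Fin.cons_zero]
    congr 1
    funext a
    exact congrArg (h 0 a) (funext fun s => Fin.elim0 s)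
  · refine prod_congr rfl fun t _ => ?_
    simp only [pre_cons_succ, Fin.cons_succ]
    rfl

lemma sum_pi_fin_succ {α : Type*} [Fintype α] (f : (Fin (T + 1) → α) → ℝ) :
    ∑ u, f u = ∑ w, ∑ u : Fin T → α, f (Fin.cons w u) := by
  rw [← (Fin.consEquiv fun _ => α).sum_comp, Fintype.sum_prod_type]
  rfl

lemma sum_pathProb (h : ∀ t : Fin T, M → (Fin t.1 → Fin n → Bool) → ℝ) (m : Fin n → M) :
    ∑ u, pathProb h m u = 1 := by
  induction T with
  | zero => simp [pathProb]
  | succ T ih =>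
    simp only [sum_pi_fin_succ, pathProb_cons, ← mul_sum, ih, mul_one, sum_ell]

lemma condCost_succ (k : Fin (T + 1) → (Fin n → M) → (Fin n → Bool) → ℝ)
    (h : ∀ t : Fin (T + 1), M → (Fin t.1 → Fin n → Bool) → ℝ) (m : Fin n → M) :
    condCost k h m = ∑ w, ell (firstPrescription h) m w *
      (k 0 m w + condCost (Fin.tail k) (strategyAfter h w) m) := by
  simp only [condCost, sum_pi_fin_succ, pathProb_cons, Fin.sum_univ_succ, Fin.cons_zero,
    Fin.cons_succ]
  refine sum_congr rfl fun w _ => ?_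
  simp only [mul_add, mul_assoc, ← mul_sum, sum_add_distrib, ← sum_mul, sum_pathProb, one_mul]
  rfl

lemma Jsym_eq_sum_condCost [Fintype M] (π : (Fin n → M) → ℝ)
    (k : Fin T → (Fin n → M) → (Fin n → Bool) → ℝ)
    (h : ∀ t : Fin T, M → (Fin t.1 → Fin n → Bool) → ℝ) :
    Jsym π k h = ∑ m, π m * condCost k h m :=
  rfl

lemma Jsym_succ [Fintype M] {π : (Fin n → M) → ℝ} (hπ : ∀ m, 0 ≤ π m)
    (k : Fin (T + 1) → (Fin n → M) → (Fin n → Bool) → ℝ)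
    (h : ∀ t : Fin (T + 1), M → (Fin t.1 → Fin n → Bool) → ℝ)
    (hγ : firstPrescription h ∈ prescriptions M) :
    Jsym π k h = (∑ m, ∑ w, π m * ell (firstPrescription h) m w * k 0 m w) +
      ∑ w, Pout π (firstPrescription h) w *
        Jsym (etaUpd π (firstPrescription h) w) (Fin.tail k) (strategyAfter h w) := by
  simp only [Jsym_eq_sum_condCost, Pout_mul_sum_etaUpd_mul hπ hγ, condCost_succ, mul_add, mul_sum,
    sum_add_distrib]
  rw [sum_comm (γ := Fin n → Bool)]
  congr 1 <;> simp only [mul_assoc]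

end PathDecomposition

section DynamicProgramming

variable {n : ℕ} {M : Type} [Fintype M]

lemma le_sum_mul_of_forall_le {ι : Type*} [Fintype ι] {p f : ι → ℝ} {c : ℝ}
    (hp : ∀ i, 0 ≤ p i) (hp_sum : ∑ i, p i = 1) (hf : ∀ i, c ≤ f i) :
    c ≤ ∑ i, p i * f i :=
  calc c = ∑ i, p i * c := by rw [← sum_mul, hp_sum, one_mul]
    _ ≤ ∑ i, p i * f i := sum_le_sum fun i _ => mul_le_mul_of_nonneg_left (hf i) (hp i)

lemma add_le_stepVal {k : (Fin n → M) → (Fin n → Bool) → ℝ} {W : ((Fin n → M) → ℝ) → ℝ}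
    {C L : ℝ} (hk : ∀ m u, C ≤ k m u) (hW : ∀ π ∈ simplex n M, L ≤ W π)
    {π : (Fin n → M) → ℝ} (hπ : π ∈ simplex n M) {γ : M → ℝ} (hγ : γ ∈ prescriptions M) :
    C + L ≤ stepVal k W π γ := by
  refine add_le_add ?_ ?_
  · simp only [mul_assoc, ← mul_sum]
    exact le_sum_mul_of_forall_le hπ.1 hπ.2 fun m =>
      le_sum_mul_of_forall_le (ell_nonneg hγ m) (sum_ell γ m) (hk m)
  · exact le_sum_mul_of_forall_le (Pout_nonneg hπ.1 hγ) (by rw [sum_Pout, hπ.2])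
      fun u => hW _ (etaUpd_mem_simplex hπ hγ u)

/-- In `ℝ`, `sInf` of a set that is not bounded below is `0`; this bound is what makes the
`sInf` in the recursion a genuine infimum. -/
lemma exists_forall_le_dpValue {T : ℕ} (k : Fin T → (Fin n → M) → (Fin n → Bool) → ℝ)
    (V : ℕ → ((Fin n → M) → ℝ) → ℝ) (hVT : ∀ π, V T π = 0)
    (hV : ∀ t : Fin T, ∀ π, V t.1 π =
      sInf ((fun γ => stepVal (k t) (V (t.1 + 1)) π γ) '' prescriptions M)) :
    ∃ L, ∀ π ∈ simplex n M, L ≤ V 0 π := by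
  induction T generalizing V with
  | zero => exact ⟨0, fun π _ => (hVT π).ge⟩
  | succ T ih =>
    obtain ⟨L, hL⟩ := ih (Fin.tail k) (fun t => V (t + 1)) hVT fun t => hV t.succ
    obtain ⟨C, hC⟩ := Finite.exists_ge fun p : (Fin n → M) × (Fin n → Bool) => k 0 p.1 p.2
    refine ⟨C + L, fun π hπ => ?_⟩
    rw [show V 0 π = _ from hV 0 π]
    refine le_csInf (.image _ ⟨fun _ => 0, fun _ => ⟨le_rfl, zero_le_one⟩⟩) ?_
    rintro _ ⟨γ, hγ, rfl⟩
    exact add_le_stepVal (fun m u => hC (m, u)) hL hπ hγ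

lemma dpValue_le_stepVal {T : ℕ} (k : Fin (T + 1) → (Fin n → M) → (Fin n → Bool) → ℝ)
    (V : ℕ → ((Fin n → M) → ℝ) → ℝ) (hVT : ∀ π, V (T + 1) π = 0)
    (hV : ∀ t : Fin (T + 1), ∀ π, V t.1 π =
      sInf ((fun γ => stepVal (k t) (V (t.1 + 1)) π γ) '' prescriptions M))
    {π : (Fin n → M) → ℝ} (hπ : π ∈ simplex n M) {γ : M → ℝ} (hγ : γ ∈ prescriptions M) :
    V 0 π ≤ stepVal (k 0) (V 1) π γ := by
  obtain ⟨L, hL⟩ :=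
    exists_forall_le_dpValue (Fin.tail k) (fun t => V (t + 1)) hVT fun t => hV t.succ
  obtain ⟨C, hC⟩ := Finite.exists_ge fun p : (Fin n → M) × (Fin n → Bool) => k 0 p.1 p.2
  rw [show V 0 π = _ from hV 0 π]
  refine csInf_le ⟨C + L, ?_⟩ ⟨γ, hγ, rfl⟩
  rintro _ ⟨γ', hγ', rfl⟩
  exact add_le_stepVal (fun m u => hC (m, u)) hL hπ hγ'

end DynamicProgramming

section Optimality

variable {n : ℕ} {M : Type} [Fintype M]

lemma dpValue_le_Jsym {T : ℕ} (k : Fin T → (Fin n → M) → (Fin n → Bool) → ℝ)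
    (V : ℕ → ((Fin n → M) → ℝ) → ℝ) (hVT : ∀ π, V T π = 0)
    (hV : ∀ t : Fin T, ∀ π, V t.1 π =
      sInf ((fun γ => stepVal (k t) (V (t.1 + 1)) π γ) '' prescriptions M))
    {π : (Fin n → M) → ℝ} (hπ : π ∈ simplex n M)
    (h : ∀ t : Fin T, M → (Fin t.1 → Fin n → Bool) → ℝ)
    (hh : ∀ t a c, h t a c ∈ Set.Icc (0 : ℝ) 1) :
    V 0 π ≤ Jsym π k h := by
  induction T generalizing V π with
  | zero => simp [Jsym, hVT]
  | succ T ih =>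
    have hγ : firstPrescription h ∈ prescriptions M := fun a => hh 0 a _
    have hcont : ∀ w, V 1 (etaUpd π (firstPrescription h) w) ≤
        Jsym (etaUpd π (firstPrescription h) w) (Fin.tail k) (strategyAfter h w) :=
      fun w => ih (Fin.tail k) (fun t => V (t + 1)) hVT (fun t => hV t.succ)
        (etaUpd_mem_simplex hπ hγ w) (strategyAfter h w) fun _ _ _ => hh _ _ _
    rw [Jsym_succ hπ.1 k h hγ]
    calc V 0 π ≤ stepVal (k 0) (V 1) π (firstPrescription h) :=
          dpValue_le_stepVal k V hVT hV hπ hγ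
      _ ≤ _ := add_le_add le_rfl (sum_le_sum fun w _ =>
          mul_le_mul_of_nonneg_left (hcont w) (Pout_nonneg hπ.1 hγ w))

lemma Jsym_eq_dpValue {T : ℕ} (k : Fin T → (Fin n → M) → (Fin n → Bool) → ℝ)
    (V : ℕ → ((Fin n → M) → ℝ) → ℝ) (hVT : ∀ π, V T π = 0)
    (Ξ : ℕ → ((Fin n → M) → ℝ) → M → ℝ) (hΞmem : ∀ t π, Ξ t π ∈ prescriptions M)
    (hΞmin : ∀ t : Fin T, ∀ π, stepVal (k t) (V (t.1 + 1)) π (Ξ t.1 π) = V t.1 π)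
    {π : (Fin n → M) → ℝ} (hπ : π ∈ simplex n M)
    (B : (t : ℕ) → (Fin t → Fin n → Bool) → (Fin n → M) → ℝ) (hB0 : ∀ c, B 0 c = π)
    (hBs : ∀ (t : ℕ) (c : Fin (t + 1) → Fin n → Bool),
      B (t + 1) c =
        etaUpd (B t fun s => c s.castSucc)
          (Ξ t (B t fun s => c s.castSucc)) (c (Fin.last t))) :
    Jsym π k (fun t a c => Ξ t.1 (B t.1 c) a) = V 0 π := by
  induction T generalizing V Ξ π B with
  | zero => simp [Jsym, hVT]
  | succ T ih =>
    have hfirst : firstPrescription (T := T) (fun t a c => Ξ t.1 (B t.1 c) a) = Ξ 0 π :=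
      funext fun a => by simp only [firstPrescription, Fin.val_zero, hB0]
    have hB1 : ∀ w c, B 1 (Fin.cons w c) = etaUpd π (Ξ 0 π) w := fun w c => by
      rw [hBs 0, hB0]
      rfl
    have hcont : ∀ w, Jsym (etaUpd π (Ξ 0 π) w) (Fin.tail k)
        (strategyAfter (T := T) (fun t a c => Ξ t.1 (B t.1 c) a) w) = V 1 (etaUpd π (Ξ 0 π) w) :=
      fun w => ih (Fin.tail k) (fun t => V (t + 1)) hVT (fun t => Ξ (t + 1))
        (fun t => hΞmem (t + 1)) (fun t => hΞmin t.succ)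
        (etaUpd_mem_simplex hπ (hΞmem 0 π) w)
        (fun t c => B (t + 1) (Fin.cons w c)) (hB1 w) fun t c => by
          rw [hBs (t + 1) (Fin.cons w c), init_cons, Fin.cons_last]
    rw [Jsym_succ hπ.1 k _ (hfirst ▸ hΞmem 0 π), hfirst]
    simp only [hcont]
    exact hΞmin 0 π

end Optimality

/-- Times are 0-indexed; `B t c` is the belief after the history `c` of length `t`. -/
theorem dp_symmetric_strategy_is_optimal_general
    (n T : ℕ)
    (M : Type) [Fintype M]
    (π₁ : (Fin n → M) → ℝ) (hπ₁ : π₁ ∈ simplex n M)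
    (k : Fin T → (Fin n → M) → (Fin n → Bool) → ℝ)
    (V : ℕ → ((Fin n → M) → ℝ) → ℝ)
    (hVT : ∀ π, V T π = 0)
    (hV : ∀ t : Fin T, ∀ π, V t.1 π =
      sInf ((fun γ => stepVal (k t) (V (t.1 + 1)) π γ) '' prescriptions M))
    (Ξ : ℕ → ((Fin n → M) → ℝ) → M → ℝ)
    (hΞmem : ∀ t π, Ξ t π ∈ prescriptions M)
    (hΞmin : ∀ t : Fin T, ∀ π, stepVal (k t) (V (t.1 + 1)) π (Ξ t.1 π) = V t.1 π)
    (B : (t : ℕ) → (Fin t → Fin n → Bool) → (Fin n → M) → ℝ)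
    (hB0 : ∀ c, B 0 c = π₁)
    (hBs : ∀ (t : ℕ) (c : Fin (t + 1) → Fin n → Bool),
      B (t + 1) c =
        etaUpd (B t fun s => c s.castSucc)
          (Ξ t (B t fun s => c s.castSucc)) (c (Fin.last t))) :
    (∀ h : ∀ t : Fin T, M → (Fin t.1 → Fin n → Bool) → ℝ,
      (∀ t a c, h t a c ∈ Set.Icc (0 : ℝ) 1) →
      Jsym π₁ k (fun t a c => Ξ t.1 (B t.1 c) a) ≤ Jsym π₁ k h) ∧
    Jsym π₁ k (fun t a c => Ξ t.1 (B t.1 c) a) = V 0 π₁ := by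
  have hvalue := Jsym_eq_dpValue k V hVT Ξ hΞmem hΞmin hπ₁ B hB0 hBs
  exact ⟨fun h hh => hvalue ▸ dpValue_le_Jsym k V hVT hV hπ₁ h hh, hvalue⟩

/-- Let `Ξ_t(π)` be a minimizer in the DP recursion at each time `t` and belief `π`,
and let `g*` be the symmetric strategy that, along any action history, tracks the
belief via `Π₁ = π₁`, `Π_{s+1} = η(Π_s, Ξ_s(Π_s), u_s)` and plays
`g*_t(m, u_{1:t-1}) = Ξ_t(Π_t)(m)`. Then `g*` is optimal among symmetric strategies,
i.e. `J(g*) ≤ J(h)` for every symmetric strategy `h`, and `J(g*) = V₁(π₁)`.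
(Times are 0-indexed; `B t c` is the belief after the history `c` of length `t`.) -/
theorem dp_symmetric_strategy_is_optimal
    (n T : ℕ) (hn : 1 ≤ n) (hT : 1 ≤ T)
    (M : Type) [Fintype M] [Nonempty M]
    (π₁ : (Fin n → M) → ℝ) (hπ₁ : π₁ ∈ simplex n M)
    (k : Fin T → (Fin n → M) → (Fin n → Bool) → ℝ)
    (V : ℕ → ((Fin n → M) → ℝ) → ℝ)
    (hVT : ∀ π, V T π = 0)
    (hV : ∀ t : Fin T, ∀ π, V t.1 π =
      sInf ((fun γ => stepVal (k t) (V (t.1 + 1)) π γ) '' prescriptions M))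
    (Ξ : ℕ → ((Fin n → M) → ℝ) → M → ℝ)
    (hΞmem : ∀ t π, Ξ t π ∈ prescriptions M)
    (hΞmin : ∀ t : Fin T, ∀ π, stepVal (k t) (V (t.1 + 1)) π (Ξ t.1 π) = V t.1 π)
    (B : (t : ℕ) → (Fin t → Fin n → Bool) → (Fin n → M) → ℝ)
    (hB0 : ∀ c, B 0 c = π₁)
    (hBs : ∀ (t : ℕ) (c : Fin (t + 1) → Fin n → Bool),
      B (t + 1) c =
        etaUpd (B t fun s => c s.castSucc)
          (Ξ t (B t fun s => c s.castSucc)) (c (Fin.last t))) :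
    (∀ h : ∀ t : Fin T, M → (Fin t.1 → Fin n → Bool) → ℝ,
      (∀ t a c, h t a c ∈ Set.Icc (0 : ℝ) 1) →
      Jsym π₁ k (fun t a c => Ξ t.1 (B t.1 c) a) ≤ Jsym π₁ k h) ∧
    Jsym π₁ k (fun t a c => Ξ t.1 (B t.1 c) a) = V 0 π₁ :=
  dp_symmetric_strategy_is_optimal_general n T M π₁ hπ₁ k V hVT hV Ξ hΞmem hΞmin B hB0 hBs
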